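/- Let g be an n-dimensional Lie algebra over a field of characteristic zero with α(g) = n−1. Then β(g) = n−1, i.e., g contains an abelian ideal of codimension 1. -/

import Mathlib

open Module

noncomputable def alphaInv (K L : Type*) [Field K] [LieRing L] [LieAlgebra K L] : ℕ :=
  sSup {n | ∃ a : LieSubalgebra K L, IsLieAbelian a ∧ finrank K a = n}

noncomputable def betaInv (K L : Type*) [Field K] [LieRing L] [LieAlgebra K L] : ℕ :=
  sSup {n | ∃ I : LieIdeal K L, IsLieAbelian I ∧ finrank K I = n}

/-!
Let `a` be an abelian subalgebra of codimension one. If `a` is an ideal we are done. Otherwise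
there are `x` and `z₀ ∈ a` with `w = ⁅x, z₀⁆ ∉ a`, so `L = a ⊕ K w`. For `y ∈ a`, write
`⁅x, y⁆ = b + t x` with `b ∈ a`; the Jacobi identity for `x, z₀, y` gives `⁅w, y⁆ = t w`.
Hence `ad w` maps `L` into `K w`, and its kernel, the centralizer of `w`, is an ideal of
codimension at most one. It is abelian: writing its elements as `y + s w` with `y ∈ a`, the
parts `y` commute with `w` and with each other. Conversely every abelian ideal is an abelian
subalgebra, so `β(g) ≤ α(g)`.
-/

theorem Submodule.exists_mem_add_smul_eq {K V : Type*} [Field K] [AddCommGroup V] [Module K V]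
    [FiniteDimensional K V] {p : Submodule K V} (hp : finrank K V ≤ finrank K p + 1)
    {x : V} (hx : x ∉ p) (z : V) : ∃ y ∈ p, ∃ t : K, y + t • x = z := by
  have hlt : p < p ⊔ K ∙ x :=
    SetLike.lt_iff_le_and_exists.mpr ⟨le_sup_left, x, mem_sup_right (mem_span_singleton_self x), hx⟩
  have htop : p ⊔ K ∙ x = ⊤ := by
    have := Submodule.finrank_lt_finrank_of_lt hlt
    exact eq_top_of_finrank_eq (le_antisymm (finrank_le _) (by omega))
  obtain ⟨y, hy, v, hv, rfl⟩ := mem_sup.mp (htop ▸ mem_top : z ∈ p ⊔ K ∙ x)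
  obtain ⟨t, rfl⟩ := mem_span_singleton.mp hv
  exact ⟨y, hy, t, rfl⟩

section

variable {K L : Type*} [Field K] [LieRing L] [LieAlgebra K L]

theorem exists_isLieAbelian_lieIdeal_toSubmodule_eq (p : Submodule K L)
    (hp : ∀ y ∈ p, ∀ z ∈ p, ⁅y, z⁆ = 0) (hideal : ∀ (x : L), ∀ y ∈ p, ⁅x, y⁆ ∈ p) :
    ∃ I : LieIdeal K L, IsLieAbelian I ∧ (I : Submodule K L) = p := by
  obtain ⟨I, rfl⟩ := (p.exists_lieSubmodule_coe_eq_iff L).mpr hideal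
  exact ⟨I, ⟨fun u v => Subtype.ext (hp _ u.2 _ v.2)⟩, rfl⟩

theorem lie_lie_eq_zero_of_lie_mem_span_singleton {x y : L} (hx : ∀ z, ⁅x, z⁆ ∈ K ∙ x)
    (hy : ⁅x, y⁆ = 0) (z : L) : ⁅x, ⁅z, y⁆⁆ = 0 := by
  obtain ⟨t, ht⟩ := Submodule.mem_span_singleton.mp (hx z)
  rw [leibniz_lie, ← ht, hy, smul_lie, hy, smul_zero, lie_zero, add_zero]

theorem finrank_le_finrank_ker_ad_add_one [FiniteDimensional K L] {x : L}
    (hx : ∀ z, ⁅x, z⁆ ∈ K ∙ x) :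
    finrank K L ≤ finrank K (LinearMap.ker (LieAlgebra.ad K L x)) + 1 := by
  have hrange : LinearMap.range (LieAlgebra.ad K L x) ≤ K ∙ x := by
    rintro _ ⟨z, rfl⟩
    exact hx z
  have hle := (Submodule.finrank_mono hrange).trans (finrank_span_le_card ({x} : Set L))
  have := LinearMap.finrank_range_add_finrank_ker (LieAlgebra.ad K L x)
  simp only [Set.toFinset_singleton, Finset.card_singleton] at hle
  omega

variable [FiniteDimensional K L] {a : Submodule K L}

theorem lie_eq_zero_of_lie_eq_zero_of_notMem (ha : ∀ y ∈ a, ∀ z ∈ a, ⁅y, z⁆ = 0)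
    (hcodim : finrank K L ≤ finrank K a + 1) {x u v : L} (hx : x ∉ a)
    (hu : ⁅x, u⁆ = 0) (hv : ⁅x, v⁆ = 0) : ⁅u, v⁆ = 0 := by
  obtain ⟨y, hy, s, rfl⟩ := Submodule.exists_mem_add_smul_eq hcodim hx u
  obtain ⟨y', hy', t, rfl⟩ := Submodule.exists_mem_add_smul_eq hcodim hx v
  have hxy : ⁅x, y⁆ = 0 := by simpa using hu
  have hxy' : ⁅x, y'⁆ = 0 := by simpa using hv
  rw [add_lie, lie_add, lie_add, ha y hy y' hy', smul_lie, smul_lie, hxy', lie_smul, lie_smul,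
    lie_self, ← lie_skew, hxy]
  simp

theorem lie_mem_span_singleton_lie (ha : ∀ y ∈ a, ∀ z ∈ a, ⁅y, z⁆ = 0)
    (hcodim : finrank K L ≤ finrank K a + 1) {x z₀ : L}
    (hx : x ∉ a) (hz₀ : z₀ ∈ a) (hw : ⁅x, z₀⁆ ∉ a) (z : L) : ⁅⁅x, z₀⁆, z⁆ ∈ K ∙ ⁅x, z₀⁆ := by
  have key : ∀ y ∈ a, ⁅⁅x, z₀⁆, y⁆ ∈ K ∙ ⁅x, z₀⁆ := by
    intro y hy
    obtain ⟨b, hb, t, hbt⟩ := Submodule.exists_mem_add_smul_eq hcodim hx ⁅x, y⁆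
    have h := leibniz_lie x z₀ y
    rw [ha z₀ hz₀ y hy, lie_zero, ← hbt, lie_add, lie_smul, ha z₀ hz₀ b hb, ← lie_skew z₀ x] at h
    refine Submodule.mem_span_singleton.mpr ⟨t, ?_⟩
    linear_combination (norm := module) h
  obtain ⟨y, hy, s, rfl⟩ := Submodule.exists_mem_add_smul_eq hcodim hw z
  rw [lie_add, lie_smul, lie_self, smul_zero, add_zero]
  exact key y hy

theorem exists_isLieAbelian_lieIdeal_finrank_ge (ha : ∀ y ∈ a, ∀ z ∈ a, ⁅y, z⁆ = 0)
    (hcodim : finrank K L ≤ finrank K a + 1) :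
    ∃ I : LieIdeal K L, IsLieAbelian I ∧ finrank K a ≤ finrank K I := by
  by_cases hideal : ∀ (x : L), ∀ y ∈ a, ⁅x, y⁆ ∈ a
  · obtain ⟨I, hI, hIa⟩ := exists_isLieAbelian_lieIdeal_toSubmodule_eq a ha hideal
    exact ⟨I, hI, hIa ▸ le_rfl⟩
  push Not at hideal
  obtain ⟨x, z₀, hz₀, hw⟩ := hideal
  have hx : x ∉ a := fun hx => hw (by rw [ha x hx z₀ hz₀]; exact zero_mem a)
  have hspan := lie_mem_span_singleton_lie ha hcodim hx hz₀ hw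
  obtain ⟨I, hI, hIker⟩ := exists_isLieAbelian_lieIdeal_toSubmodule_eq
    (LinearMap.ker (LieAlgebra.ad K L ⁅x, z₀⁆))
    (fun u hu v hv => lie_eq_zero_of_lie_eq_zero_of_notMem ha hcodim hw hu hv)
    (fun z y hy => lie_lie_eq_zero_of_lie_mem_span_singleton hspan hy z)
  refine ⟨I, hI, ?_⟩
  have hker := finrank_le_finrank_ker_ad_add_one hspan
  have ha_lt : finrank K a < finrank K L := Submodule.finrank_lt fun h => hx (h ▸ Submodule.mem_top)
  have hI_eq : finrank K I = finrank K (LinearMap.ker (LieAlgebra.ad K L ⁅x, z₀⁆)) := by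
    rw [← hIker]; rfl
  omega

theorem finrank_le_alphaInv (a : LieSubalgebra K L) (ha : IsLieAbelian a) :
    finrank K a ≤ alphaInv K L :=
  le_csSup ⟨finrank K L, by rintro _ ⟨b, -, rfl⟩; exact Submodule.finrank_le b.toSubmodule⟩
    ⟨a, ha, rfl⟩

theorem finrank_le_betaInv (I : LieIdeal K L) (hI : IsLieAbelian I) :
    finrank K I ≤ betaInv K L :=
  le_csSup ⟨finrank K L, by rintro _ ⟨J, -, rfl⟩; exact Submodule.finrank_le J.toSubmodule⟩
    ⟨I, hI, rfl⟩

theorem betaInv_le_alphaInv : betaInv K L ≤ alphaInv K L :=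
  csSup_le' fun _ ⟨I, hI, hn⟩ => hn ▸ finrank_le_alphaInv (I : LieSubalgebra K L) hI

theorem exists_isLieAbelian_finrank_eq_alphaInv :
    ∃ a : LieSubalgebra K L, IsLieAbelian a ∧ finrank K a = alphaInv K L := by
  refine Nat.sSup_mem (s := {n | ∃ a : LieSubalgebra K L, IsLieAbelian a ∧ finrank K a = n})
    ⟨_, ⊥, ⟨fun u v => Subtype.ext ?_⟩, rfl⟩
    ⟨finrank K L, by rintro _ ⟨b, -, rfl⟩; exact Submodule.finrank_le b.toSubmodule⟩
  simp [(LieSubalgebra.mem_bot u.1).mp u.2]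

end

theorem stmt_5_general (K L : Type*) [Field K] [LieRing L] [LieAlgebra K L]
    [FiniteDimensional K L] (n : ℕ) (hn : finrank K L = n)
    (halpha : alphaInv K L = n - 1) : betaInv K L = n - 1 := by
  obtain ⟨a, ha, ha_dim⟩ := exists_isLieAbelian_finrank_eq_alphaInv (K := K) (L := L)
  have ha_lie : ∀ y ∈ a.toSubmodule, ∀ z ∈ a.toSubmodule, ⁅y, z⁆ = 0 :=
    fun y hy z hz => congrArg Subtype.val (ha.trivial ⟨y, hy⟩ ⟨z, hz⟩)
  obtain ⟨I, hI, hI_dim⟩ := exists_isLieAbelian_lieIdeal_finrank_ge ha_lie (by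
    change finrank K L ≤ finrank K a + 1
    omega)
  have hβI := finrank_le_betaInv I hI
  have hβα := betaInv_le_alphaInv (K := K) (L := L)
  change finrank K a ≤ finrank K I at hI_dim
  omega

/-- If α(g) = n-1 then β(g) = n-1. -/
theorem stmt_5 (K L : Type*) [Field K] [CharZero K] [LieRing L] [LieAlgebra K L]
    [FiniteDimensional K L] (n : ℕ) (hn : finrank K L = n)
    (halpha : alphaInv K L = n - 1) : betaInv K L = n - 1 :=
  stmt_5_general K L n hn halpha
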